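/- Suppose 𝕂 is a computable age with JEP. Then 𝕂 has CJEP(d), where d is the Turing degree of EmbedInfo(𝕂). -/

import Mathlib

/- Self-contained framework for computable ages and cofinal Fraïssé limits. -/

namespace CFL

open Classical

/-! ### Oracle computability -/

/-- The characteristic partial function of a set of naturals. -/
noncomputable def chi (A : Set ℕ) : ℕ →. ℕ :=
  fun n => Part.some (if n ∈ A then 1 else 0)

/-- Codes for oracle partial recursive functions. -/
inductive OCode : Type
  | zero : OCode
  | succ : OCode
  | left : OCode
  | right : OCode
  | oracle : OCode
  | pair : OCode → OCode → OCode
  | comp : OCode → OCode → OCode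
  | prec : OCode → OCode → OCode
  | rfind' : OCode → OCode

/-- Evaluation of an oracle code relative to an oracle `O`. -/
def OCode.eval (O : ℕ →. ℕ) : OCode → ℕ →. ℕ
  | OCode.zero => pure 0
  | OCode.succ => Nat.succ
  | OCode.left => ↑fun n : ℕ => n.unpair.1
  | OCode.right => ↑fun n : ℕ => n.unpair.2
  | OCode.oracle => O
  | OCode.pair cf cg => fun n => Nat.pair <$> OCode.eval O cf n <*> OCode.eval O cg n
  | OCode.comp cf cg => fun n => OCode.eval O cg n >>= OCode.eval O cf
  | OCode.prec cf cg =>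
    Nat.unpaired fun a n =>
      n.rec (OCode.eval O cf a) fun y IH => do
        let i ← IH
        OCode.eval O cg (Nat.pair a (Nat.pair y i))
  | OCode.rfind' cf =>
    Nat.unpaired fun a m =>
      (Nat.rfind fun n => (fun m => m = 0) <$> OCode.eval O cf (Nat.pair a (n + m))).map
        (· + m)

/-- A numerical code of an `OCode`. -/
def OCode.encodeCode : OCode → ℕ
  | OCode.zero => 0
  | OCode.succ => 1
  | OCode.left => 2
  | OCode.right => 3
  | OCode.oracle => 4
  | OCode.pair cf cg => 4 * Nat.pair cf.encodeCode cg.encodeCode + 5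
  | OCode.comp cf cg => 4 * Nat.pair cf.encodeCode cg.encodeCode + 6
  | OCode.prec cf cg => 4 * Nat.pair cf.encodeCode cg.encodeCode + 7
  | OCode.rfind' cf => 4 * cf.encodeCode + 8

/-- `f` is a partial function recursive in the oracle set `O`. -/
def RecFunIn (O : Set ℕ) (f : ℕ →. ℕ) : Prop :=
  ∃ c : OCode, OCode.eval (chi O) c = f

/-- The code `c` computes the total function `f` relative to the oracle set `O`. -/
def ComputesIn (O : Set ℕ) (c : OCode) (f : ℕ → ℕ) : Prop :=
  ∀ n, OCode.eval (chi O) c n = Part.some (f n)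

/-- `f` is a total function computable in the oracle set `O`. -/
def TotalComputableIn (O : Set ℕ) (f : ℕ → ℕ) : Prop :=
  ∃ c : OCode, ComputesIn O c f

/-- The set `A` is computable in the oracle set `O`. -/
def SetRecIn (O A : Set ℕ) : Prop := RecFunIn O (chi A)

/-- Turing reducibility (on sets of naturals, regarded as representatives of
Turing degrees). -/
def TuringLE (A B : Set ℕ) : Prop := SetRecIn B A

/-- The set `A` is computably enumerable in the oracle set `O`. -/
def CEIn (O A : Set ℕ) : Prop :=
  ∃ c : OCode, ∀ n, n ∈ A ↔ (OCode.eval (chi O) c n).Dom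

/-- The Turing jump of a set of naturals. -/
def jump (O : Set ℕ) : Set ℕ :=
  { e | ∃ c : OCode, c.encodeCode = (Nat.unpair e).1 ∧
      (OCode.eval (chi O) c (Nat.unpair e).2).Dom }

/-- `0'`, the jump of the least degree. -/
def zeroJump : Set ℕ := jump ∅

/-- `0''`. -/
def zeroJump2 : Set ℕ := jump zeroJump

/-- `0'''`. -/
def zeroJump3 : Set ℕ := jump zeroJump2

/-! ### Languages and structures -/

/-- A (coded) first-order language: `relArity r = some k` means that `r` is the code of a
relation symbol of arity `k`, and similarly for function symbols. -/
structure Lang where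
  relArity : ℕ → Option ℕ
  funArity : ℕ → Option ℕ

/-- The language is computably represented. -/
def Lang.ComputableRep (L : Lang) : Prop :=
  TotalComputableIn ∅ (fun r => Encodable.encode (L.relArity r)) ∧
  TotalComputableIn ∅ (fun f => Encodable.encode (L.funArity f))

/-- A finite relational language. -/
def Lang.FiniteRelational (L : Lang) : Prop :=
  (∀ f, L.funArity f = none) ∧ { r | (L.relArity r).isSome = true }.Finite

/-- A finite language. -/
def Lang.FiniteLang (L : Lang) : Prop :=
  { r | (L.relArity r).isSome = true }.Finite ∧
  { f | (L.funArity f).isSome = true }.Finite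

/-- An `L`-structure with underlying set a set of naturals. -/
structure Str (L : Lang) where
  dom : Set ℕ
  rel : ℕ → List ℕ → Prop
  fn : ℕ → List ℕ → ℕ
  rel_valid : ∀ r as, rel r as → L.relArity r = some as.length ∧ ∀ x ∈ as, x ∈ dom
  fn_mem : ∀ f as, L.funArity f = some as.length → (∀ x ∈ as, x ∈ dom) → fn f as ∈ dom

variable {L : Lang}

/-- The (finite) tuple `as` lies in the structure `A`. -/
def TupleIn (A : Str L) (as : List ℕ) : Prop := ∀ x ∈ as, x ∈ A.dom

/-- Membership in the substructure of `A` generated by the tuple `s`. -/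
inductive InClosure (A : Str L) (s : List ℕ) : ℕ → Prop
  | base {x : ℕ} : x ∈ s → x ∈ A.dom → InClosure A s x
  | fn (f : ℕ) (as : List ℕ) : L.funArity f = some as.length →
      (∀ x ∈ as, InClosure A s x) → InClosure A s (A.fn f as)

theorem InClosure.mem_dom {A : Str L} {s : List ℕ} {x : ℕ}
    (h : InClosure A s x) : x ∈ A.dom := by
  induction h with
  | base _ hx => exact hx
  | fn f as ha _ ih => exact A.fn_mem f as ha ih

/-- The substructure of `A` generated by the tuple `s`. -/
def Str.sub (A : Str L) (s : List ℕ) : Str L where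
  dom := { x | InClosure A s x }
  rel r as := A.rel r as ∧ ∀ x ∈ as, InClosure A s x
  fn := A.fn
  rel_valid := fun r as h => ⟨(A.rel_valid r as h.1).1, h.2⟩
  fn_mem := fun f as ha hm => InClosure.fn f as ha hm

/-- `h` is an embedding of `A` into `B`. -/
def IsEmbMap (A B : Str L) (h : ℕ → ℕ) : Prop :=
  (∀ x ∈ A.dom, h x ∈ B.dom) ∧
  (∀ x ∈ A.dom, ∀ y ∈ A.dom, h x = h y → x = y) ∧
  (∀ r as, TupleIn A as → (A.rel r as ↔ B.rel r (as.map h))) ∧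
  (∀ f as, L.funArity f = some as.length → TupleIn A as →
    h (A.fn f as) = B.fn f (as.map h))

/-- `A` embeds into `B`. -/
def Embeds (A B : Str L) : Prop := ∃ h, IsEmbMap A B h

/-- `h` is an isomorphism of `A` onto `B`. -/
def IsIsoMap (A B : Str L) (h : ℕ → ℕ) : Prop :=
  IsEmbMap A B h ∧ ∀ y ∈ B.dom, ∃ x ∈ A.dom, h x = y

/-- `A` and `B` are isomorphic. -/
def Isom (A B : Str L) : Prop := ∃ h, IsIsoMap A B h

/-- `as ∼cl bs`: the coordinatewise map extends to an isomorphism of generated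
substructures. -/
def ClSim (A : Str L) (as : List ℕ) (B : Str L) (bs : List ℕ) : Prop :=
  ∃ h : ℕ → ℕ, as.map h = bs ∧ IsIsoMap (A.sub as) (B.sub bs) h

/-- `as ∼tuple bs`: equal length and the same pattern of equalities among coordinates. -/
def TupleSim (as bs : List ℕ) : Prop :=
  ∃ h h' : ℕ → ℕ, as.map h = bs ∧ bs.map h' = as

/-- `A` is finitely generated. -/
def Str.FG (A : Str L) : Prop :=
  ∃ s : List ℕ, TupleIn A s ∧ ∀ x, x ∈ A.dom ↔ InClosure A s x

/-- `g` is an automorphism of `M`. -/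
def IsAutoOf (M : Str L) (g : ℕ → ℕ) : Prop := IsIsoMap M M g

/-! ### Ages (as isomorphism-closed classes) -/

/-- `B` belongs to the age of `M`, i.e. `B` is isomorphic to a finitely generated
substructure of `M`. -/
def AgeMemOf (M : Str L) (B : Str L) : Prop :=
  ∃ as : List ℕ, TupleIn M as ∧ Isom B (M.sub as)

/-- The age of a structure `M`. -/
def ageOf (M : Str L) : Set (Str L) := { B | AgeMemOf M B }

/-- The hereditary property. -/
def HP (C : Set (Str L)) : Prop :=
  ∀ B ∈ C, ∀ as : List ℕ, TupleIn B as → B.sub as ∈ C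

/-- The joint embedding property. -/
def JEP (C : Set (Str L)) : Prop :=
  ∀ A ∈ C, ∀ B ∈ C, ∃ D ∈ C, Embeds A D ∧ Embeds B D

/-- Every pair of embeddings with domain `A` into members of `C` can be amalgamated
over `A` inside `C`. -/
def AmalgamatesOver (C : Set (Str L)) (A : Str L) : Prop :=
  ∀ B₀ ∈ C, ∀ B₁ ∈ C, ∀ f₀ f₁ : ℕ → ℕ, IsEmbMap A B₀ f₀ → IsEmbMap A B₁ f₁ →
    ∃ D ∈ C, ∃ g₀ g₁ : ℕ → ℕ, IsEmbMap B₀ D g₀ ∧ IsEmbMap B₁ D g₁ ∧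
      ∀ x ∈ A.dom, g₀ (f₀ x) = g₁ (f₁ x)

/-- The amalgamation property. -/
def AP (C : Set (Str L)) : Prop := ∀ A ∈ C, AmalgamatesOver C A

/-- `A` is an amalgamation base of the class `C`. -/
def AmalgBase (C : Set (Str L)) (A : Str L) : Prop := A ∈ C ∧ AmalgamatesOver C A

/-- The cofinal amalgamation property. -/
def CoAP (C : Set (Str L)) : Prop :=
  ∀ A ∈ C, ∃ A' : Str L, AmalgBase C A' ∧ Embeds A A'

/-! ### Computable ages -/

/-- An (abstract) enumerated age: for each index `i`, a generating tuple `tup i` and the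
structure `str i` it generates. -/
structure CompAge (L : Lang) where
  tup : ℕ → List ℕ
  str : ℕ → Str L
  tup_mem : ∀ i, TupleIn (str i) (tup i)
  gen : ∀ i x, x ∈ (str i).dom ↔ InClosure (str i) (tup i) x

/-- The class of structures represented by the enumerated age `K`. -/
def CompAge.cls (K : CompAge L) : Set (Str L) := { B | ∃ i, Isom B (K.str i) }

/-- The structure `M` is computable in the oracle set `s`. -/
def StrComputableIn (s : Set ℕ) (M : Str L) : Prop :=
  SetRecIn s M.dom ∧
  SetRecIn s { p | ∃ r as, TupleIn M as ∧ M.rel r as ∧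
      p = Nat.pair r (Encodable.encode as) } ∧
  SetRecIn s { p | ∃ f as b, L.funArity f = some as.length ∧ TupleIn M as ∧
      M.fn f as = b ∧ p = Nat.pair f (Nat.pair (Encodable.encode as) b) }

/-- The coded diagram of an enumerated age. -/
def CompAge.diag (K : CompAge L) : Set ℕ :=
  { p | ∃ i, p = Nat.pair 0 (Nat.pair i (Encodable.encode (K.tup i))) } ∪
  { p | ∃ i x, x ∈ (K.str i).dom ∧ p = Nat.pair 1 (Nat.pair i x) } ∪
  { p | ∃ i r as, TupleIn (K.str i) as ∧ (K.str i).rel r as ∧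
      p = Nat.pair 2 (Nat.pair i (Nat.pair r (Encodable.encode as))) } ∪
  { p | ∃ i r as, TupleIn (K.str i) as ∧ L.relArity r = some as.length ∧
      ¬ (K.str i).rel r as ∧
      p = Nat.pair 3 (Nat.pair i (Nat.pair r (Encodable.encode as))) } ∪
  { p | ∃ i f as b, TupleIn (K.str i) as ∧ L.funArity f = some as.length ∧
      (K.str i).fn f as = b ∧
      p = Nat.pair 4 (Nat.pair i (Nat.pair f (Nat.pair (Encodable.encode as) b))) }

/-- `K` is an `s`-computable age: its diagram is c.e. in `s` and each of its structures
is computable in `s`. -/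
def AgeComputableIn (s : Set ℕ) (K : CompAge L) : Prop :=
  CEIn s K.diag ∧ ∀ i, StrComputableIn s (K.str i)

/-- The embedding information of an enumerated age, as a set of naturals. -/
def EmbedInfo (K : CompAge L) : Set ℕ :=
  { p | ∃ k₀ b₀ k₁ b₁, TupleIn (K.str k₀) b₀ ∧ TupleIn (K.str k₁) b₁ ∧
      ClSim (K.str k₀) b₀ (K.str k₁) b₁ ∧
      p = Nat.pair k₀ (Nat.pair (Encodable.encode b₀)
            (Nat.pair k₁ (Encodable.encode b₁))) }

/-! ### Potential embeddings, spans, and amalgamation diagrams -/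

/-- A potential embedding: a pair of indices and a tuple in the codomain structure. -/
structure PotEmb where
  i : ℕ
  j : ℕ
  c : List ℕ

/-- A numerical code of a potential embedding. -/
def PotEmb.code (F : PotEmb) : ℕ :=
  Nat.pair F.i (Nat.pair F.j (Encodable.encode F.c))

/-- The potential embedding is well-formed with respect to `K`. -/
def PotEmb.Valid (K : CompAge L) (F : PotEmb) : Prop :=
  F.c.length = (K.tup F.i).length ∧ TupleIn (K.str F.j) F.c

/-- The potential embedding is an embedding. -/
def PotEmb.IsEmb (K : CompAge L) (F : PotEmb) : Prop :=
  ClSim (K.str F.i) (K.tup F.i) (K.str F.j) F.c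

/-- The potential embedding is an isomorphism (its range generates the codomain). -/
def PotEmb.IsIso (K : CompAge L) (F : PotEmb) : Prop :=
  F.IsEmb K ∧ ∀ x ∈ (K.str F.j).dom, InClosure (K.str F.j) F.c x

/-- `h` realizes the potential embedding `F` as a map on the domain structure. -/
def ExtMap (K : CompAge L) (F : PotEmb) (h : ℕ → ℕ) : Prop :=
  (K.tup F.i).map h = F.c ∧ IsEmbMap (K.str F.i) (K.str F.j) h

/-- `(F₀, F₁)` is a potential span. -/
def PotSpan (K : CompAge L) (F₀ F₁ : PotEmb) : Prop :=
  F₀.Valid K ∧ F₁.Valid K ∧ F₀.i = F₁.i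

/-- `(G₀, G₁)` is an amalgamation diagram over the potential span `(F₀, F₁)`. -/
def AmalgDiagOver (K : CompAge L) (F₀ F₁ G₀ G₁ : PotEmb) : Prop :=
  G₀.Valid K ∧ G₁.Valid K ∧ G₀.IsEmb K ∧
  G₀.i = F₀.j ∧ G₁.i = F₁.j ∧ G₀.j = G₁.j ∧
  (F₀.IsEmb K → F₁.IsEmb K → G₁.IsEmb K ∧
    ∀ h₀ h₁ : ℕ → ℕ, ExtMap K G₀ h₀ → ExtMap K G₁ h₁ →
      F₀.c.map h₀ = F₁.c.map h₁)

/-- `H` is the composition `F ∘ G` of potential embeddings (where `F` is an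
embedding realized by any `h` extending it). -/
def CompRel (K : CompAge L) (F G H : PotEmb) : Prop :=
  G.j = F.i ∧ H.i = G.i ∧ H.j = F.j ∧
  ∀ h : ℕ → ℕ, ExtMap K F h → H.c = G.c.map h

/-! ### Computable versions of HP, JEP, AP, coAP -/

/-- The `s`-computable hereditary property. -/
def CHP (s : Set ℕ) (K : CompAge L) : Prop :=
  ∃ c : OCode, ∀ i (b : List ℕ), TupleIn (K.str i) b →
    ∃ j, OCode.eval (chi s) c (Nat.pair i (Encodable.encode b)) = Part.some j ∧
      ClSim (K.str j) (K.tup j) (K.str i) b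

/-- The `s`-computable joint embedding property. -/
def CJEP (s : Set ℕ) (K : CompAge L) : Prop :=
  ∃ c : OCode, ∀ i j : ℕ, ∃ F G : PotEmb,
    OCode.eval (chi s) c (Nat.pair i j) = Part.some (Nat.pair F.code G.code) ∧
    F.Valid K ∧ G.Valid K ∧ F.IsEmb K ∧ G.IsEmb K ∧
    F.i = i ∧ G.i = j ∧ F.j = G.j

/-- The `s`-computable amalgamation property. -/
def CAP (s : Set ℕ) (K : CompAge L) : Prop :=
  ∃ c : OCode, ∀ F₀ F₁ : PotEmb, PotSpan K F₀ F₁ →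
    ∃ G₀ G₁ : PotEmb,
      OCode.eval (chi s) c (Nat.pair F₀.code F₁.code) =
        Part.some (Nat.pair G₀.code G₁.code) ∧
      AmalgDiagOver K F₀ F₁ G₀ G₁

/-- A family `W` of distinguished embeddings with amalgamation-base codomains, closed
under pre/post composition with isomorphisms, covering all domains. -/
def IsCoAPFamily (K : CompAge L) (W : Set PotEmb) : Prop :=
  (∀ F ∈ W, F.Valid K ∧ F.IsEmb K ∧ AmalgBase K.cls (K.str F.j)) ∧
  (∀ F ∈ W, ∀ G H : PotEmb, G.Valid K → G.IsIso K → G.j = F.i →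
      CompRel K F G H → H ∈ W) ∧
  (∀ F ∈ W, ∀ G H : PotEmb, G.Valid K → G.IsIso K → G.i = F.j →
      CompRel K G F H → H ∈ W) ∧
  (∀ i : ℕ, ∃ F ∈ W, F.i = i)

/-- The `s`-computable cofinal amalgamation property: there is an `s`-c.e. family of
distinguished embeddings onto amalgamation bases together with an `s`-computable
amalgamation function. -/
def CcoAP (s : Set ℕ) (K : CompAge L) : Prop :=
  ∃ W : Set PotEmb, IsCoAPFamily K W ∧
    CEIn s { p | ∃ F ∈ W, p = F.code } ∧
    ∃ c : OCode, ∀ F ∈ W, ∀ G₀ G₁ : PotEmb,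
      G₀.Valid K → G₁.Valid K → G₀.i = F.j → G₁.i = F.j →
      ∃ D₀ D₁ : PotEmb,
        OCode.eval (chi s) c (Nat.pair F.code (Nat.pair G₀.code G₁.code)) =
          Part.some (Nat.pair D₀.code D₁.code) ∧
        AmalgDiagOver K G₀ G₁ D₀ D₁

/-! ### Ultrahomogeneity -/

/-- `M` is ultrahomogeneous: every isomorphism between finitely generated substructures
extends to an automorphism. -/
def Ultrahomogeneous (M : Str L) : Prop :=
  ∀ as bs : List ℕ, TupleIn M as → TupleIn M bs → ClSim M as M bs →
    ∃ g : ℕ → ℕ, IsAutoOf M g ∧ as.map g = bs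

/-- `g` is a bijection of the underlying set of `M` with itself. -/
def BijOnDom (M : Str L) (g : ℕ → ℕ) : Prop :=
  (∀ x ∈ M.dom, g x ∈ M.dom) ∧
  (∀ x ∈ M.dom, ∀ y ∈ M.dom, g x = g y → x = y) ∧
  (∀ y ∈ M.dom, ∃ x ∈ M.dom, g x = y)

/-- `M` is `s`-computably ultrahomogeneous. -/
def CompUltrahom (s : Set ℕ) (M : Str L) : Prop :=
  ∃ c : OCode, ∀ as bs : List ℕ, TupleIn M as → TupleIn M bs →
    as.length = bs.length →
    ∃ e : ℕ,
      OCode.eval (chi s) c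
          (Nat.pair (Encodable.encode as) (Encodable.encode bs)) = Part.some e ∧
      ∃ c' : OCode, c'.encodeCode = e ∧ ∃ g : ℕ → ℕ, ComputesIn s c' g ∧
        BijOnDom M g ∧
        (ClSim M as M bs → IsAutoOf M g ∧ as.map g = bs)

/-! ### Cofinal ultrahomogeneity -/

/-- `M` is cofinally ultrahomogeneous. -/
def CofinallyUltrahomogeneous (M : Str L) : Prop :=
  ∀ as : List ℕ, TupleIn M as → ∃ bs : List ℕ, TupleIn M bs ∧
    (∀ x ∈ as, InClosure M bs x) ∧
    ∀ cs : List ℕ, TupleIn M cs → ClSim M bs M cs →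
      ∃ g : ℕ → ℕ, IsAutoOf M g ∧ bs.map g = cs

/-- `E` is a cofinal collection of tuples in `M`. -/
def IsCofinalCollection (M : Str L) (E : Set (List ℕ)) : Prop :=
  (∀ bs ∈ E, TupleIn M bs) ∧
  (∀ as : List ℕ, TupleIn M as → ∃ bs ∈ E, ∀ x ∈ as, InClosure M bs x) ∧
  (∀ bs ∈ E, ∀ as : List ℕ, (∀ x ∈ as, InClosure M bs x) → (as ++ bs) ∈ E) ∧
  (∀ as ∈ E, ∀ bs : List ℕ, TupleIn M bs → ClSim M as M bs → bs ∈ E)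

/-- `M` is cofinally ultrahomogeneous for the collection `E`: every isomorphism between
substructures generated by members of `E` extends to an automorphism. -/
def CofUltraFor (M : Str L) (E : Set (List ℕ)) : Prop :=
  ∀ as ∈ E, ∀ bs ∈ E, ClSim M as M bs →
    ∃ g : ℕ → ℕ, IsAutoOf M g ∧ as.map g = bs

/-- The set of codes of members of `E`. -/
def ECodes (E : Set (List ℕ)) : Set ℕ := { p | ∃ as ∈ E, p = Encodable.encode as }

/-- The functional part of `s`-computable cofinal ultrahomogeneity with respect to `E`. -/
def CofUltraFunIn (s : Set ℕ) (M : Str L) (E : Set (List ℕ)) : Prop :=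
  ∃ c : OCode, ∀ as ∈ E, ∀ bs : List ℕ, TupleIn M bs → TupleSim as bs →
    ∃ e : ℕ,
      OCode.eval (chi s) c
          (Nat.pair (Encodable.encode as) (Encodable.encode bs)) = Part.some e ∧
      ∃ c' : OCode, c'.encodeCode = e ∧ ∃ g : ℕ → ℕ, ComputesIn s c' g ∧
        BijOnDom M g ∧ as.map g = bs ∧
        (ClSim M as M bs → IsAutoOf M g)

/-- `M` is `s`-computably cofinally ultrahomogeneous with respect to `E`. -/
def CompCofUltrahomWrt (s : Set ℕ) (M : Str L) (E : Set (List ℕ)) : Prop :=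
  IsCofinalCollection M E ∧ SetRecIn s (ECodes E) ∧ CofUltraFunIn s M E

/-- `M` is `s`-computably cofinally ultrahomogeneous. -/
def CompCofUltrahom (s : Set ℕ) (M : Str L) : Prop :=
  ∃ E : Set (List ℕ), CompCofUltrahomWrt s M E

/-- The `s`-computable cofinal extension property with respect to `E`. -/
def CompCofExtProp (s : Set ℕ) (M : Str L) (E : Set (List ℕ)) : Prop :=
  ∃ c : OCode, ∀ as bs cs : List ℕ, as ∈ E → cs ∈ E → TupleIn M bs →
    (∀ x ∈ as, InClosure M cs x) → TupleSim as bs →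
    ∃ ds : List ℕ,
      OCode.eval (chi s) c
          (Nat.pair (Encodable.encode as)
            (Nat.pair (Encodable.encode bs) (Encodable.encode cs))) =
        Part.some (Encodable.encode ds) ∧
      TupleIn M ds ∧ TupleSim (as ++ cs) (bs ++ ds) ∧
      (ClSim M as M bs →
        ClSim M ds M cs ∧ (∀ x ∈ bs, InClosure M ds x) ∧
        ∀ h h' : ℕ → ℕ,
          ds.map h = cs → IsIsoMap (M.sub ds) (M.sub cs) h →
          bs.map h' = as → IsIsoMap (M.sub bs) (M.sub as) h' →
          bs.map h = bs.map h')

/-! ### Canonical ages and limits -/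

/-- `K` is a canonical age of `M` (relative to the oracle `t`): the enumeration of
generating tuples is `t`-computable, lists every finite tuple of `M` infinitely often,
and `str i` is the substructure generated by `tup i`. -/
def IsCanonicalAgeOf (t : Set ℕ) (K : CompAge L) (M : Str L) : Prop :=
  TotalComputableIn t (fun i => Encodable.encode (K.tup i)) ∧
  (∀ i, TupleIn M (K.tup i)) ∧
  (∀ as : List ℕ, TupleIn M as → ∀ n : ℕ, ∃ i, n ≤ i ∧ K.tup i = as) ∧
  (∀ i, K.str i = M.sub (K.tup i))

/-- `K` represents the age of `M`. -/
def RepresentsAgeOf (K : CompAge L) (M : Str L) : Prop :=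
  (∀ i, AgeMemOf M (K.str i)) ∧
  (∀ B : Str L, AgeMemOf M B → ∃ i, Isom B (K.str i))

/-- `M` is a cofinal Fraïssé limit of (the age represented by) `K`. -/
def CofinalFraisseLimitOf (K : CompAge L) (M : Str L) : Prop :=
  CofinallyUltrahomogeneous M ∧ RepresentsAgeOf K M

/-- The enumerated age `K` is uniformly finite. -/
def UniformlyFinite (K : CompAge L) : Prop :=
  L.FiniteLang ∧ ∃ f : ℕ → ℕ, TotalComputableIn ∅ f ∧
    ∀ i, ∀ as : List ℕ, TupleIn (K.str i) as →
      { x | InClosure (K.str i) as x }.Finite ∧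
      { x | InClosure (K.str i) as x }.ncard ≤ f as.length

/-! A computable age lists the generating tuple `K.tup i` of each of its structures, and the
graph `i ↦ K.tup i` is part of its c.e. diagram, so `i ↦ K.tup i` is computable. Hence
`EmbedInfo K` decides, for any `i`, `k` and tuple `c` of `K.str k`, whether `K.tup i ↦ c`
extends to an embedding `K.str i → K.str k`: ask whether `(i, K.tup i, k, c)` belongs to it.
Given `i` and `j`, an `EmbedInfo K`-computable search through all triples `(k, c, d)` then
finds embeddings `K.tup i ↦ c` and `K.tup j ↦ d` into a common `K.str k`, and JEP guarantees
that the search terminates. -/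

section OracleComputability

variable {O : Set ℕ}

theorem exists_ocode_eval_eq_of_natPartrec {f : ℕ →. ℕ} (hf : Nat.Partrec f) (Ω : ℕ →. ℕ) :
    ∃ c : OCode, OCode.eval Ω c = f := by
  induction hf with
  | zero => exact ⟨.zero, rfl⟩
  | succ => exact ⟨.succ, rfl⟩
  | left => exact ⟨.left, rfl⟩
  | right => exact ⟨.right, rfl⟩
  | pair _ _ ihf ihg =>
    obtain ⟨cf, rfl⟩ := ihf
    obtain ⟨cg, rfl⟩ := ihg
    exact ⟨.pair cf cg, rfl⟩
  | comp _ _ ihf ihg =>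
    obtain ⟨cf, rfl⟩ := ihf
    obtain ⟨cg, rfl⟩ := ihg
    exact ⟨.comp cf cg, rfl⟩
  | prec _ _ ihf ihg =>
    obtain ⟨cf, rfl⟩ := ihf
    obtain ⟨cg, rfl⟩ := ihg
    exact ⟨.prec cf cg, rfl⟩
  | rfind _ ih =>
    obtain ⟨cf, rfl⟩ := ih
    -- `rfind'` searches from an offset, here `0`
    refine ⟨.comp (.rfind' cf) (.pair (.pair .left .right) .zero), funext fun a => ?_⟩
    simp only [OCode.eval, Seq.seq, Part.map_eq_map, Part.bind_eq_bind, pure, PFun.pure,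
      Part.bind_some, Part.map_some, PFun.coe_val, Nat.pair_unpair, Nat.unpaired,
      Nat.unpair_pair, Nat.add_zero]
    exact Part.map_id' (fun _ => rfl) _

theorem TotalComputableIn.of_computable {f : ℕ → ℕ} (hf : Computable f) :
    TotalComputableIn O f := by
  obtain ⟨c, hc⟩ := exists_ocode_eval_eq_of_natPartrec (Partrec.nat_iff.1 hf) (chi O)
  exact ⟨c, fun n => by rw [hc]; rfl⟩

theorem TotalComputableIn.comp {f g : ℕ → ℕ} (hf : TotalComputableIn O f)
    (hg : TotalComputableIn O g) : TotalComputableIn O (f ∘ g) := by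
  obtain ⟨cf, hcf⟩ := hf
  obtain ⟨cg, hcg⟩ := hg
  exact ⟨.comp cf cg, fun n => by
    simp only [OCode.eval, hcg n]
    exact (Part.bind_some _ _).trans (hcf _)⟩

theorem TotalComputableIn.pair {f g : ℕ → ℕ} (hf : TotalComputableIn O f)
    (hg : TotalComputableIn O g) : TotalComputableIn O fun n => Nat.pair (f n) (g n) := by
  obtain ⟨cf, hcf⟩ := hf
  obtain ⟨cg, hcg⟩ := hg
  exact ⟨.pair cf cg, fun n => by simp [OCode.eval, hcf n, hcg n, Seq.seq]⟩

theorem setRecIn_iff_totalComputableIn {A : Set ℕ} :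
    SetRecIn O A ↔ TotalComputableIn O fun n => if n ∈ A then 1 else 0 :=
  exists_congr fun _ => funext_iff

theorem setRecIn_self : SetRecIn O O := ⟨.oracle, rfl⟩

theorem SetRecIn.preimage {A : Set ℕ} (hA : SetRecIn O A) {f : ℕ → ℕ} (hf : Computable f) :
    SetRecIn O (f ⁻¹' A) :=
  setRecIn_iff_totalComputableIn.2
    ((setRecIn_iff_totalComputableIn.1 hA).comp (.of_computable hf))

theorem SetRecIn.inter {A B : Set ℕ} (hA : SetRecIn O A) (hB : SetRecIn O B) :
    SetRecIn O (A ∩ B) := by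
  rw [setRecIn_iff_totalComputableIn] at *
  have hmul : Computable fun v : ℕ => v.unpair.1 * v.unpair.2 :=
    (Primrec.nat_mul.comp (Primrec.fst.comp Primrec.unpair)
      (Primrec.snd.comp Primrec.unpair)).to_comp
  convert (TotalComputableIn.of_computable hmul).comp (hA.pair hB) using 1
  funext n
  by_cases hnA : n ∈ A <;> by_cases hnB : n ∈ B <;> simp [hnA, hnB]

theorem SetRecIn.exists_selector {A : Set ℕ} (hA : SetRecIn O A)
    (h : ∀ a, ∃ n, Nat.pair a n ∈ A) :
    ∃ s : ℕ → ℕ, TotalComputableIn O s ∧ ∀ a, Nat.pair a (s a) ∈ A := by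
  have hnot : Computable fun v : ℕ => 1 - v :=
    (Primrec.nat_sub.comp (Primrec.const 1) Primrec.id).to_comp
  obtain ⟨ct, hct⟩ := (TotalComputableIn.of_computable hnot).comp
    (setRecIn_iff_totalComputableIn.1 hA)
  obtain ⟨cz, hcz⟩ := TotalComputableIn.of_computable (O := O)
    (Primrec₂.natPair.comp Primrec.id (Primrec.const 0)).to_comp
  refine ⟨fun a => Nat.find (h a), ⟨.comp (.rfind' ct) cz, fun a => ?_⟩,
    fun a => Nat.find_spec (h a)⟩
  simp only [OCode.eval, hcz a, Part.bind_eq_bind, Part.bind_some, Nat.unpaired,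
    Nat.unpair_pair, Nat.add_zero]
  refine Part.eq_some_iff.2 ((Part.mem_map_iff _).2 ⟨Nat.find (h a), ?_, rfl⟩)
  refine Nat.mem_rfind.2 ⟨by simp [hct _, Nat.find_spec (h a)], fun hm => ?_⟩
  simp [hct _, Nat.find_min (h a) hm]

end OracleComputability

section Embeddings

variable {L : Lang} {A B C : Str L}

theorem isEmbMap_id (A : Str L) : IsEmbMap A A id :=
  ⟨fun _ hx => hx, fun _ _ _ _ h => h, fun _ _ _ => by simp, fun _ _ _ _ => by simp⟩

theorem TupleIn.map {h : ℕ → ℕ} (hh : ∀ x ∈ A.dom, h x ∈ B.dom) {as : List ℕ}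
    (has : TupleIn A as) : TupleIn B (as.map h) := by
  intro y hy
  obtain ⟨x, hx, rfl⟩ := List.mem_map.1 hy
  exact hh x (has x hx)

theorem IsEmbMap.comp {f g : ℕ → ℕ} (hg : IsEmbMap B C g) (hf : IsEmbMap A B f) :
    IsEmbMap A C (g ∘ f) := by
  obtain ⟨g_mem, g_inj, g_rel, g_fn⟩ := hg
  obtain ⟨f_mem, f_inj, f_rel, f_fn⟩ := hf
  refine ⟨fun x hx => g_mem _ (f_mem _ hx),
    fun x hx y hy h => f_inj _ hx _ hy (g_inj _ (f_mem _ hx) _ (f_mem _ hy) h),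
    fun r as has => ?_, fun fn as ha has => ?_⟩
  · rw [f_rel r as has, g_rel r _ (has.map f_mem), List.map_map]
  · rw [Function.comp_apply, f_fn fn as ha has,
      g_fn fn _ (by rwa [List.length_map]) (has.map f_mem), List.map_map]

theorem CompAge.str_mem_cls (K : CompAge L) (i : ℕ) : K.str i ∈ K.cls :=
  ⟨i, id, isEmbMap_id _, fun y hy => ⟨y, hy, rfl⟩⟩

theorem InClosure.map {h : ℕ → ℕ} (hh : IsEmbMap A B h) {s : List ℕ} {x : ℕ}
    (hx : InClosure A s x) : InClosure B (s.map h) (h x) := by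
  induction hx with
  | base hs hx => exact .base (List.mem_map_of_mem hs) (hh.1 _ hx)
  | fn f as ha has ih =>
    rw [hh.2.2.2 f as ha fun y hy => (has y hy).mem_dom]
    refine .fn f _ (by rwa [List.length_map]) fun y hy => ?_
    obtain ⟨x, hx, rfl⟩ := List.mem_map.1 hy
    exact ih x hx

theorem InClosure.exists_preimage {h : ℕ → ℕ} (hh : IsEmbMap A B h) {s : List ℕ}
    (hs : TupleIn A s) {y : ℕ} (hy : InClosure B (s.map h) y) :
    ∃ x, InClosure A s x ∧ h x = y := by
  induction hy with
  | base hy _ =>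
    obtain ⟨x, hx, rfl⟩ := List.mem_map.1 hy
    exact ⟨x, .base hx (hs x hx), rfl⟩
  | fn f bs hf _ ih =>
    obtain ⟨as, rfl⟩ : bs ∈ Set.range (List.map fun x : {x // InClosure A s x} => h x) := by
      rw [Set.range_list_map]
      intro y hy
      obtain ⟨x, hx, rfl⟩ := ih y hy
      exact ⟨⟨x, hx⟩, rfl⟩
    have hlen : L.funArity f = some (as.map Subtype.val).length := by simpa using hf
    have has : ∀ x ∈ as.map Subtype.val, InClosure A s x := by simp +contextual
    refine ⟨A.fn f (as.map Subtype.val), .fn f _ hlen has, ?_⟩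
    rw [hh.2.2.2 f _ hlen fun x hx => (has x hx).mem_dom, List.map_map]
    rfl

theorem clSim_map_of_isEmbMap {h : ℕ → ℕ} (hh : IsEmbMap A B h) {s : List ℕ}
    (hs : TupleIn A s) : ClSim A s B (s.map h) := by
  refine ⟨h, rfl, ⟨fun x hx => hx.map hh,
    fun x hx y hy hxy => hh.2.1 x hx.mem_dom y hy.mem_dom hxy,
    fun r as has => ?_, fun f as hf has => hh.2.2.2 f as hf fun x hx => (has x hx).mem_dom⟩,
    fun y hy => hy.exists_preimage hh hs⟩
  have hrel := hh.2.2.1 r as fun x hx => (has x hx).mem_dom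
  constructor
  · rintro ⟨hr, -⟩
    refine ⟨hrel.1 hr, fun y hy => ?_⟩
    obtain ⟨x, hx, rfl⟩ := List.mem_map.1 hy
    exact (has x hx).map hh
  · rintro ⟨hr, -⟩
    exact ⟨hrel.2 hr, has⟩

theorem ClSim.length_eq {as bs : List ℕ} (h : ClSim A as B bs) : bs.length = as.length := by
  obtain ⟨h, rfl, -⟩ := h
  exact List.length_map _

end Embeddings

section ComputableAges

variable {L : Lang}

theorem Computable.of_dom_graph {f : ℕ → ℕ} {g : ℕ →. ℕ} (hg : Nat.Partrec g)
    (hgf : ∀ i m, (g (Nat.pair i m)).Dom ↔ f i = m) : Computable f := by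
  obtain ⟨c, rfl⟩ := Nat.Partrec.Code.exists_code.1 hg
  -- `s = ⟪m, t⟫` certifies `f i = m` once `c` halts on `⟪i, m⟫` within `t` steps
  let Certifies : ℕ → ℕ → Prop := fun i s =>
    (c.evaln s.unpair.2 (Nat.pair i s.unpair.1)).isSome
  have certifies_iff : ∀ i m, (∃ t, Certifies i (Nat.pair m t)) ↔ f i = m := by
    intro i m
    simp only [Certifies, Nat.unpair_pair, Option.isSome_iff_exists, ← hgf, Part.dom_iff_mem,
      Nat.Partrec.Code.evaln_complete, Option.mem_def]
    exact exists_comm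
  have hex : ∀ i, ∃ s, Certifies i s := fun i =>
    let ⟨t, ht⟩ := (certifies_iff i (f i)).2 rfl
    ⟨_, ht⟩
  have hcert : ComputablePred fun p : ℕ × ℕ => Certifies p.1 p.2 :=
    Computable.computablePred <| (Primrec.option_isSome.comp (Nat.Partrec.Code.primrec_evaln.comp
      (((Primrec.snd.comp (Primrec.unpair.comp Primrec.snd)).pair (Primrec.const c)).pair
        (Primrec₂.natPair.comp Primrec.fst
          (Primrec.fst.comp (Primrec.unpair.comp Primrec.snd)))))).to_comp.of_eq
      fun _ => by simp [Certifies]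
  refine ((Primrec.fst.comp Primrec.unpair).to_comp.comp (Computable.find hcert hex)).of_eq
    fun i => ?_
  have hs := Nat.find_spec (hex i)
  rw [← Nat.pair_unpair (Nat.find (hex i))] at hs
  exact ((certifies_iff i _).1 ⟨_, hs⟩).symm

theorem natPartrec_eval_chi_empty (c : OCode) : Nat.Partrec (OCode.eval (chi ∅) c) := by
  induction c with
  | zero => exact .zero
  | succ => exact .succ
  | left => exact .left
  | right => exact .right
  | oracle =>
    convert Nat.Partrec.zero using 1
    funext n
    simp [OCode.eval, chi]
    rfl
  | pair _ _ ihf ihg => exact ihf.pair ihg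
  | comp _ _ ihf ihg => exact ihf.comp ihg
  | prec _ _ ihf ihg => exact ihf.prec ihg
  | rfind' _ ih => exact ih.rfind'

theorem CompAge.pair_zero_mem_diag_iff (K : CompAge L) (i m : ℕ) :
    Nat.pair 0 (Nat.pair i m) ∈ K.diag ↔ m = Encodable.encode (K.tup i) := by
  refine ⟨fun h => ?_, fun h => Or.inl (Or.inl (Or.inl (Or.inl ⟨i, h ▸ rfl⟩)))⟩
  rcases h with ((((⟨_, hp⟩ | ⟨_, _, _, hp⟩) | ⟨_, _, _, _, _, hp⟩) |
      ⟨_, _, _, _, _, _, hp⟩) | ⟨_, _, _, _, _, _, _, hp⟩) <;>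
    simp only [Nat.pair_eq_pair] at hp
  · obtain ⟨-, rfl, rfl⟩ := hp
    rfl
  all_goals omega

theorem CompAge.computable_encode_tup (K : CompAge L) (hK : CEIn ∅ K.diag) :
    Computable fun i => Encodable.encode (K.tup i) := by
  obtain ⟨c, hc⟩ := hK
  have hpair : Computable (Nat.pair 0) :=
    (Primrec₂.natPair.comp (Primrec.const 0) Primrec.id).to_comp
  refine Computable.of_dom_graph
    (Partrec.nat_iff.1 ((Partrec.nat_iff.2 (natPartrec_eval_chi_empty c)).comp hpair))
    fun i m => ?_
  rw [← hc, K.pair_zero_mem_diag_iff, eq_comm]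

def CompAge.embCodes (K : CompAge L) : Set ℕ :=
  { p | ∃ F : PotEmb, F.Valid K ∧ F.IsEmb K ∧ F.code = p }

theorem CompAge.mem_embCodes_iff (K : CompAge L) (p : ℕ) :
    p ∈ K.embCodes ↔ Nat.pair p.unpair.1
      (Nat.pair (Encodable.encode (K.tup p.unpair.1)) p.unpair.2) ∈ EmbedInfo K := by
  constructor
  · rintro ⟨F, hF, hemb, rfl⟩
    simp only [PotEmb.code, Nat.unpair_pair]
    exact ⟨F.i, K.tup F.i, F.j, F.c, K.tup_mem F.i, hF.2, hemb, rfl⟩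
  · rintro ⟨k₀, b₀, k₁, b₁, -, hb₁, hcl, hp⟩
    simp only [Nat.pair_eq_pair, Encodable.encode_inj] at hp
    obtain ⟨hk₀, rfl, hp⟩ := hp
    refine ⟨⟨k₀, k₁, b₁⟩, ⟨hcl.length_eq.trans (by rw [hk₀]), hb₁⟩, hk₀ ▸ hcl, ?_⟩
    rw [PotEmb.code, ← hk₀, ← hp, Nat.pair_unpair]

theorem CompAge.setRecIn_embCodes (K : CompAge L) (hK : CEIn ∅ K.diag) :
    SetRecIn (EmbedInfo K) K.embCodes := by
  have hquery : Computable fun p : ℕ =>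
      Nat.pair p.unpair.1 (Nat.pair (Encodable.encode (K.tup p.unpair.1)) p.unpair.2) := by
    have hu₁ : Computable fun p : ℕ => p.unpair.1 := (Primrec.fst.comp Primrec.unpair).to_comp
    have hu₂ : Computable fun p : ℕ => p.unpair.2 := (Primrec.snd.comp Primrec.unpair).to_comp
    exact Primrec₂.natPair.to_comp.comp hu₁
      (Primrec₂.natPair.to_comp.comp ((K.computable_encode_tup hK).comp hu₁) hu₂)
  convert setRecIn_self.preimage hquery using 1
  exact Set.ext K.mem_embCodes_iff

end ComputableAges

section JointEmbedding

variable {L : Lang}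

theorem CompAge.exists_potEmb_of_JEP (K : CompAge L) (hJEP : JEP K.cls) (i j : ℕ) :
    ∃ F G : PotEmb, F.Valid K ∧ G.Valid K ∧ F.IsEmb K ∧ G.IsEmb K ∧
      F.i = i ∧ G.i = j ∧ F.j = G.j := by
  obtain ⟨D, ⟨k, e, he⟩, ⟨f, hf⟩, ⟨g, hg⟩⟩ := hJEP _ (K.str_mem_cls i) _ (K.str_mem_cls j)
  have hef := he.1.comp hf
  have heg := he.1.comp hg
  refine ⟨⟨i, k, (K.tup i).map (e ∘ f)⟩, ⟨j, k, (K.tup j).map (e ∘ g)⟩,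
    ⟨List.length_map _, (K.tup_mem i).map hef.1⟩, ⟨List.length_map _, (K.tup_mem j).map heg.1⟩,
    clSim_map_of_isEmbMap hef (K.tup_mem i), clSim_map_of_isEmbMap heg (K.tup_mem j),
    rfl, rfl, rfl⟩

theorem CompAge.CJEP_of_setRecIn_embCodes (K : CompAge L) (hJEP : JEP K.cls) {O : Set ℕ}
    (hO : SetRecIn O K.embCodes) : CJEP O K := by
  -- for `x = ⟪⟪i, j⟫, ⟪k, c, d⟫⟫` these are `⟪i, k, c⟫` and `⟪j, k, d⟫`
  let candidate₁ : ℕ → ℕ := fun x =>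
    Nat.pair x.unpair.1.unpair.1 (Nat.pair x.unpair.2.unpair.1 x.unpair.2.unpair.2.unpair.1)
  let candidate₂ : ℕ → ℕ := fun x =>
    Nat.pair x.unpair.1.unpair.2 (Nat.pair x.unpair.2.unpair.1 x.unpair.2.unpair.2.unpair.2)
  have hu₁ : Primrec fun p : ℕ => p.unpair.1 := Primrec.fst.comp Primrec.unpair
  have hu₂ : Primrec fun p : ℕ => p.unpair.2 := Primrec.snd.comp Primrec.unpair
  have hcandidate₁ : Primrec candidate₁ := Primrec₂.natPair.comp (hu₁.comp hu₁)
    (Primrec₂.natPair.comp (hu₁.comp hu₂) (hu₁.comp (hu₂.comp hu₂)))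
  have hcandidate₂ : Primrec candidate₂ := Primrec₂.natPair.comp (hu₂.comp hu₁)
    (Primrec₂.natPair.comp (hu₁.comp hu₂) (hu₂.comp (hu₂.comp hu₂)))
  have htotal :
      ∀ a, ∃ n, Nat.pair a n ∈ candidate₁ ⁻¹' K.embCodes ∩ candidate₂ ⁻¹' K.embCodes := by
    intro a
    obtain ⟨F, G, hF, hG, hFe, hGe, hFi, hGi, hFG⟩ := K.exists_potEmb_of_JEP hJEP
      a.unpair.1 a.unpair.2
    refine ⟨Nat.pair F.j (Nat.pair (Encodable.encode F.c) (Encodable.encode G.c)),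
      ⟨F, hF, hFe, ?_⟩, ⟨G, hG, hGe, ?_⟩⟩ <;>
      simp [candidate₁, candidate₂, PotEmb.code, Nat.unpair_pair, hFi, hGi, hFG]
  obtain ⟨s, hs, hsA⟩ := ((hO.preimage hcandidate₁.to_comp).inter
    (hO.preimage hcandidate₂.to_comp)).exists_selector htotal
  obtain ⟨c, hc⟩ := (TotalComputableIn.of_computable
      (Primrec₂.natPair.comp hcandidate₁ hcandidate₂).to_comp).comp
    ((TotalComputableIn.of_computable Computable.id).pair hs)
  refine ⟨c, fun i j => ?_⟩
  obtain ⟨⟨F, hF, hFe, hFcode⟩, ⟨G, hG, hGe, hGcode⟩⟩ := hsA (Nat.pair i j)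
  simp only [candidate₁, candidate₂, PotEmb.code, Nat.unpair_pair, Nat.pair_eq_pair]
    at hFcode hGcode
  refine ⟨F, G, ?_, hF, hG, hFe, hGe, hFcode.1, hGcode.1, hFcode.2.1.trans hGcode.2.1.symm⟩
  rw [hc]
  simp only [candidate₁, candidate₂, Function.comp_apply, id, Nat.unpair_pair, PotEmb.code,
    hFcode.1, hFcode.2.1, hFcode.2.2, hGcode.1, hGcode.2.1, hGcode.2.2]

end JointEmbedding

theorem JEP_implies_CJEP_embedinfo_general {L : Lang}
    (K : CompAge L) (hK : AgeComputableIn ∅ K)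
    (hJEP : JEP K.cls) :
    CJEP (EmbedInfo K) K :=
  K.CJEP_of_setRecIn_embCodes hJEP (K.setRecIn_embCodes hK.1)

/-- A computable age with JEP has `CJEP(d)` where `d` is the degree of
its embedding information. -/
theorem JEP_implies_CJEP_embedinfo {L : Lang} (hL : L.ComputableRep)
    (K : CompAge L) (hK : AgeComputableIn ∅ K)
    (hJEP : JEP K.cls) :
    CJEP (EmbedInfo K) K :=
  JEP_implies_CJEP_embedinfo_general K hK hJEP

end CFL
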